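/- The group ⟨x₁, x₂, x₃ | (x₁x₂)² = (x₂x₁)², [x₃, x₂ x₁ x₂ x₁⁻¹ x₂⁻¹] = e, (x₂ x₁ x₂⁻¹ x₃)² = (x₃ x₂ x₁ x₂⁻¹)², x₁ = x₂⁻¹ x₃⁻¹ x₁ x₃ x₂⟩ is isomorphic to ⟨x₁, x₂, x₃ | (x₁x₂)² = (x₂x₁)², (x₁x₃)² = (x₃x₁)², [x₃, x₁⁻¹x₂x₁] = e, [x₃x₂, x₁] = e⟩. -/

import Mathlib

open scoped commutatorElement

/-- `x 0 = x₁`, `x 1 = x₂`, `x 2 = x₃`. Van Kampen relations for `π₁(ℂ² − C₂)`. -/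
def C2relsA : Set (FreeGroup (Fin 3)) :=
  { (FreeGroup.of 0 * FreeGroup.of 1) ^ 2 * ((FreeGroup.of 1 * FreeGroup.of 0) ^ 2)⁻¹,
    ⁅(FreeGroup.of 2 : FreeGroup (Fin 3)),
      FreeGroup.of 1 * FreeGroup.of 0 * FreeGroup.of 1 * (FreeGroup.of 0)⁻¹ *
        (FreeGroup.of 1)⁻¹⁆,
    (FreeGroup.of 1 * FreeGroup.of 0 * (FreeGroup.of 1)⁻¹ * FreeGroup.of 2) ^ 2 *
      ((FreeGroup.of 2 * FreeGroup.of 1 * FreeGroup.of 0 * (FreeGroup.of 1)⁻¹) ^ 2)⁻¹,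
    FreeGroup.of 0 *
      ((FreeGroup.of 1)⁻¹ * (FreeGroup.of 2)⁻¹ * FreeGroup.of 0 * FreeGroup.of 2 *
        FreeGroup.of 1)⁻¹ }

/-- The simplified relations. -/
def C2relsB : Set (FreeGroup (Fin 3)) :=
  { (FreeGroup.of 0 * FreeGroup.of 1) ^ 2 * ((FreeGroup.of 1 * FreeGroup.of 0) ^ 2)⁻¹,
    (FreeGroup.of 0 * FreeGroup.of 2) ^ 2 * ((FreeGroup.of 2 * FreeGroup.of 0) ^ 2)⁻¹,
    ⁅(FreeGroup.of 2 : FreeGroup (Fin 3)), (FreeGroup.of 0)⁻¹ * FreeGroup.of 1 * FreeGroup.of 0⁆,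
    ⁅(FreeGroup.of 2 : FreeGroup (Fin 3)) * FreeGroup.of 1, FreeGroup.of 0⁆ }

section keys
variable {G : Type*} [Group G] (x y z : G)

theorem keyk1 (hB1 : (x*y)^2 = (y*x)^2) : y*x*y*x⁻¹*y⁻¹ = x⁻¹*y*x := by
  rw [sq, sq] at hB1
  calc y*x*y*x⁻¹*y⁻¹ = x⁻¹*(x*y*(x*y))*x⁻¹*y⁻¹ := by group
    _ = x⁻¹*(y*x*(y*x))*x⁻¹*y⁻¹ := by rw [hB1]
    _ = x⁻¹*y*x := by group

theorem keyk2 (hB4 : z*y*x = x*(z*y)) : y*x*y⁻¹ = z⁻¹*x*z := by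
  calc y*x*y⁻¹ = z⁻¹*(z*y*x)*y⁻¹ := by group
    _ = z⁻¹*(x*(z*y))*y⁻¹ := by rw [hB4]
    _ = z⁻¹*x*z := by group

theorem keyk3 (hB4 : z*y*x = x*(z*y)) : z*y*x*y⁻¹ = x*z := by
  calc z*y*x*y⁻¹ = (z*y*x)*y⁻¹ := by group
    _ = (x*(z*y))*y⁻¹ := by rw [hB4]
    _ = x*z := by group

theorem keyBA (hB1 : (x*y)^2 = (y*x)^2) (hB2 : (x*z)^2 = (z*x)^2)
    (hB3 : z*(x⁻¹*y*x) = x⁻¹*y*x*z) (hB4 : z*y*x = x*(z*y)) :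
    (z*(y*x*y*x⁻¹*y⁻¹) = y*x*y*x⁻¹*y⁻¹*z) ∧
    ((y*x*y⁻¹*z)^2 = (z*y*x*y⁻¹)^2) ∧
    (x = y⁻¹*z⁻¹*x*z*y) := by
  have k1 := keyk1 x y hB1
  have k2 := keyk2 x y z hB4
  have k3 := keyk3 x y z hB4
  refine ⟨?_, ?_, ?_⟩
  · rw [k1]; exact hB3
  · calc (y*x*y⁻¹*z)^2 = (z⁻¹*x*z*z)^2 := by rw [k2]
      _ = z⁻¹*((x*z)^2)*z := by simp only [sq]; group
      _ = z⁻¹*((z*x)^2)*z := by rw [hB2]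
      _ = (x*z)^2 := by simp only [sq]; group
      _ = (z*y*x*y⁻¹)^2 := by rw [k3]
  · calc x = y⁻¹*(z⁻¹*(z*y*x)) := by group
      _ = y⁻¹*(z⁻¹*(x*(z*y))) := by rw [hB4]
      _ = y⁻¹*z⁻¹*x*z*y := by group

theorem keyAB (hA1 : (x*y)^2 = (y*x)^2)
    (hA2 : z*(y*x*y*x⁻¹*y⁻¹) = y*x*y*x⁻¹*y⁻¹*z)
    (hA3 : (y*x*y⁻¹*z)^2 = (z*y*x*y⁻¹)^2)
    (hA4 : x = y⁻¹*z⁻¹*x*z*y) :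
    ((x*z)^2 = (z*x)^2) ∧
    (z*(x⁻¹*y*x) = x⁻¹*y*x*z) ∧
    (z*y*x = x*(z*y)) := by
  have k1 := keyk1 x y hA1
  have cB4 : z*y*x = x*(z*y) := by
    conv_lhs => rw [hA4]
    group
  have k2 := keyk2 x y z cB4
  have k3 := keyk3 x y z cB4
  refine ⟨?_, ?_, cB4⟩
  · rw [k2, k3] at hA3
    calc (x*z)^2 = z*((z⁻¹*x*z*z)^2)*z⁻¹ := by simp only [sq]; group
      _ = z*((x*z)^2)*z⁻¹ := by rw [hA3]
      _ = (z*x)^2 := by simp only [sq]; group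
  · rw [← k1]; exact hA2

end keys

theorem relOne {α : Type*} (rels : Set (FreeGroup α)) (r : FreeGroup α) (h : r ∈ rels) :
    PresentedGroup.mk rels r = 1 :=
  (QuotientGroup.eq_one_iff r).mpr (Subgroup.subset_normalClosure h)

section homs

local notation "xB" => (PresentedGroup.of 0 : PresentedGroup C2relsB)
local notation "yB" => (PresentedGroup.of 1 : PresentedGroup C2relsB)
local notation "zB" => (PresentedGroup.of 2 : PresentedGroup C2relsB)
local notation "xA" => (PresentedGroup.of 0 : PresentedGroup C2relsA)
local notation "yA" => (PresentedGroup.of 1 : PresentedGroup C2relsA)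
local notation "zA" => (PresentedGroup.of 2 : PresentedGroup C2relsA)

theorem relsA_in_B : ∀ r ∈ C2relsA,
    FreeGroup.lift (fun i => (PresentedGroup.of i : PresentedGroup C2relsB)) r = 1 := by
  have hB1 : (xB*yB)^2 = (yB*xB)^2 := by
    have e := relOne C2relsB _ (show _ ∈ C2relsB from Set.mem_insert _ _)
    simp only [map_mul, map_pow, map_inv] at e
    rw [mul_inv_eq_one] at e
    exact e
  have hB2 : (xB*zB)^2 = (zB*xB)^2 := by
    have e := relOne C2relsB _
      (show _ ∈ C2relsB from Set.mem_insert_iff.mpr (Or.inr (Set.mem_insert _ _)))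
    simp only [map_mul, map_pow, map_inv] at e
    rw [mul_inv_eq_one] at e
    exact e
  have hB3 : zB*(xB⁻¹*yB*xB) = xB⁻¹*yB*xB*zB := by
    have e := relOne C2relsB _
      (show _ ∈ C2relsB from Set.mem_insert_iff.mpr (Or.inr
        (Set.mem_insert_iff.mpr (Or.inr (Set.mem_insert _ _)))))
    simp only [map_commutatorElement, map_mul, map_inv] at e
    exact commutatorElement_eq_one_iff_mul_comm.mp e
  have hB4 : zB*yB*xB = xB*(zB*yB) := by
    have e := relOne C2relsB _
      (show _ ∈ C2relsB from Set.mem_insert_iff.mpr (Or.inr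
        (Set.mem_insert_iff.mpr (Or.inr (Set.mem_insert_iff.mpr
          (Or.inr (Set.mem_singleton _)))))))
    simp only [map_commutatorElement, map_mul, map_inv] at e
    exact commutatorElement_eq_one_iff_mul_comm.mp e
  obtain ⟨c2, c3, c4⟩ := keyBA xB yB zB hB1 hB2 hB3 hB4
  intro r hr
  rcases hr with rfl | rfl | rfl | rfl
  · simp only [map_mul, map_pow, map_inv, FreeGroup.lift_apply_of]
    rw [mul_inv_eq_one]; exact hB1
  · simp only [map_commutatorElement, map_mul, map_inv, FreeGroup.lift_apply_of]
    exact commutatorElement_eq_one_iff_mul_comm.mpr c2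
  · simp only [map_mul, map_pow, map_inv, FreeGroup.lift_apply_of]
    rw [mul_inv_eq_one]; exact c3
  · simp only [map_mul, map_inv, FreeGroup.lift_apply_of]
    rw [mul_inv_eq_one]; exact c4

theorem relsB_in_A : ∀ r ∈ C2relsB,
    FreeGroup.lift (fun i => (PresentedGroup.of i : PresentedGroup C2relsA)) r = 1 := by
  have hA1 : (xA*yA)^2 = (yA*xA)^2 := by
    have e := relOne C2relsA _ (show _ ∈ C2relsA from Set.mem_insert _ _)
    simp only [map_mul, map_pow, map_inv] at e
    rw [mul_inv_eq_one] at e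
    exact e
  have hA2 : zA*(yA*xA*yA*xA⁻¹*yA⁻¹) = yA*xA*yA*xA⁻¹*yA⁻¹*zA := by
    have e := relOne C2relsA _
      (show _ ∈ C2relsA from Set.mem_insert_iff.mpr (Or.inr (Set.mem_insert _ _)))
    simp only [map_commutatorElement, map_mul, map_inv] at e
    exact commutatorElement_eq_one_iff_mul_comm.mp e
  have hA3 : (yA*xA*yA⁻¹*zA)^2 = (zA*yA*xA*yA⁻¹)^2 := by
    have e := relOne C2relsA _
      (show _ ∈ C2relsA from Set.mem_insert_iff.mpr (Or.inr
        (Set.mem_insert_iff.mpr (Or.inr (Set.mem_insert _ _)))))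
    simp only [map_mul, map_pow, map_inv] at e
    rw [mul_inv_eq_one] at e
    exact e
  have hA4 : xA = yA⁻¹*zA⁻¹*xA*zA*yA := by
    have e := relOne C2relsA _
      (show _ ∈ C2relsA from Set.mem_insert_iff.mpr (Or.inr
        (Set.mem_insert_iff.mpr (Or.inr (Set.mem_insert_iff.mpr
          (Or.inr (Set.mem_singleton _)))))))
    simp only [map_mul, map_inv] at e
    rw [mul_inv_eq_one] at e
    exact e
  obtain ⟨c2, c3, c4⟩ := keyAB xA yA zA hA1 hA2 hA3 hA4
  intro r hr
  rcases hr with rfl | rfl | rfl | rfl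
  · simp only [map_mul, map_pow, map_inv, FreeGroup.lift_apply_of]
    rw [mul_inv_eq_one]; exact hA1
  · simp only [map_mul, map_pow, map_inv, FreeGroup.lift_apply_of]
    rw [mul_inv_eq_one]; exact c2
  · simp only [map_commutatorElement, map_mul, map_inv, FreeGroup.lift_apply_of]
    exact commutatorElement_eq_one_iff_mul_comm.mpr c3
  · simp only [map_commutatorElement, map_mul, map_inv, FreeGroup.lift_apply_of]
    exact commutatorElement_eq_one_iff_mul_comm.mpr c4

end homs

/-- The two presentations on generators `x₁, x₂, x₃` yield isomorphic groups. -/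
theorem stmt_7 : Nonempty (PresentedGroup C2relsA ≃* PresentedGroup C2relsB) := by
  refine ⟨MonoidHom.toMulEquiv (PresentedGroup.toGroup relsA_in_B)
    (PresentedGroup.toGroup relsB_in_A) ?_ ?_⟩
  · ext i
    simp [PresentedGroup.toGroup.of]
  · ext i
    simp [PresentedGroup.toGroup.of]
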